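/- Let B be a bimonoid in a braided monoidal category C. Then: (i) the shear morphism sh_B = (id_B ⊗ m) ∘ α ∘ (Δ ⊗ id_B) is an isomorphism if and only if the reversed shear morphism sh'_B = (m ⊗ id_B) ∘ α⁻¹ ∘ (id_B ⊗ Δ) is an isomorphism; and (ii) the coshear morphism sh^co_B = (m ⊗ id_B) ∘ α⁻¹ ∘ (id_B ⊗ β_{B,B}) ∘ α ∘ (Δ ⊗ id_B) is an isomorphism if and only if the reversed coshear morphism sh^{co'}_B = (id_B ⊗ m) ∘ α ∘ (β_{B,B} ⊗ id_B) ∘ α⁻¹ ∘ (id_B ⊗ Δ) is an isomorphism. -/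

import Mathlib

/-!
Write `shearBy T : a ⊗ b ↦ a₁ ⊗ T(a₂) b` (Sweedler notation) for `T : X ⟶ X`, so that
`shear X = shearBy (𝟙 X)`. The assignment `T ↦ shearBy T` turns the convolution product
`μ ∘ (T ⊗ T') ∘ Δ` into composition and the convolution unit `η ∘ ε` into the identity. It is
injective, with left inverse `g ↦ (ε ⊗ 1) ∘ g ∘ (1 ⊗ η)`, and its image contains every endomorphism
of `X ⊗ X` commuting with right multiplication and with the left coaction `Δ ⊗ 1`. The inverse of
the shear has both properties, so the shear is invertible iff `𝟙 X` has a two-sided convolution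
inverse, an antipode. The reversed shear is the shear of `X` in the monoidal opposite category,
where the antipode condition is the same with its two halves swapped. Up to a braiding, the two
coshears are the two shears for the co-opposite comultiplication `Δ ≫ β⁻¹`.
-/

open CategoryTheory MonoidalCategory

universe v u

variable {C : Type u} [Category.{v} C] [MonoidalCategory C] [BraidedCategory C]

variable (C) in
/-- Bimonoids in `C` (the old name of Mathlib's `Bimon C`). -/
abbrev Bimon_ := Bimon C

/-- The shear morphism `(id_B ⊗ m) ∘ α ∘ (Δ ⊗ id_B) : B ⊗ B ⟶ B ⊗ B` of a bimonoid `B`. -/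
noncomputable def Bimon_.shear (B : Bimon_ C) : B.X.X ⊗ B.X.X ⟶ B.X.X ⊗ B.X.X :=
  (B.comon.comul.hom ▷ B.X.X) ≫ (α_ B.X.X B.X.X B.X.X).hom ≫ (B.X.X ◁ (MonObj.mul : B.X.X ⊗ B.X.X ⟶ B.X.X))

/-- The reversed shear morphism `(m ⊗ id_B) ∘ α⁻¹ ∘ (id_B ⊗ Δ) : B ⊗ B ⟶ B ⊗ B`. -/
noncomputable def Bimon_.shear' (B : Bimon_ C) : B.X.X ⊗ B.X.X ⟶ B.X.X ⊗ B.X.X :=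
  (B.X.X ◁ B.comon.comul.hom) ≫ (α_ B.X.X B.X.X B.X.X).inv ≫ ((MonObj.mul : B.X.X ⊗ B.X.X ⟶ B.X.X) ▷ B.X.X)

/-- The coshear morphism `(m ⊗ id_B) ∘ α⁻¹ ∘ (id_B ⊗ β_{B,B}) ∘ α ∘ (Δ ⊗ id_B)`. -/
noncomputable def Bimon_.coshear (B : Bimon_ C) : B.X.X ⊗ B.X.X ⟶ B.X.X ⊗ B.X.X :=
  (B.comon.comul.hom ▷ B.X.X) ≫ (α_ B.X.X B.X.X B.X.X).hom ≫ (B.X.X ◁ (β_ B.X.X B.X.X).hom) ≫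
    (α_ B.X.X B.X.X B.X.X).inv ≫ ((MonObj.mul : B.X.X ⊗ B.X.X ⟶ B.X.X) ▷ B.X.X)

/-- The reversed coshear morphism `(id_B ⊗ m) ∘ α ∘ (β_{B,B} ⊗ id_B) ∘ α⁻¹ ∘ (id_B ⊗ Δ)`. -/
noncomputable def Bimon_.coshear' (B : Bimon_ C) : B.X.X ⊗ B.X.X ⟶ B.X.X ⊗ B.X.X :=
  (B.X.X ◁ B.comon.comul.hom) ≫ (α_ B.X.X B.X.X B.X.X).inv ≫ ((β_ B.X.X B.X.X).hom ▷ B.X.X) ≫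
    (α_ B.X.X B.X.X B.X.X).hom ≫ (B.X.X ◁ (MonObj.mul : B.X.X ⊗ B.X.X ⟶ B.X.X))

open MonoidalOpposite MonObj ComonObj BraidedCategory

namespace CategoryTheory

variable {C : Type u} [Category.{v} C] [MonoidalCategory C]

section

variable (X : C) [MonObj X] [ComonObj X]

def shear : X ⊗ X ⟶ X ⊗ X := Δ ▷ X ≫ (α_ X X X).hom ≫ X ◁ μ

def shear' : X ⊗ X ⟶ X ⊗ X := X ◁ Δ ≫ (α_ X X X).inv ≫ μ ▷ X

variable [BraidedCategory C]

def coshear : X ⊗ X ⟶ X ⊗ X :=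
  Δ ▷ X ≫ (α_ X X X).hom ≫ X ◁ (β_ X X).hom ≫ (α_ X X X).inv ≫ μ ▷ X

def coshear' : X ⊗ X ⟶ X ⊗ X :=
  X ◁ Δ ≫ (α_ X X X).inv ≫ (β_ X X).hom ▷ X ≫ (α_ X X X).hom ≫ X ◁ μ

end

lemma ComonObj.comul_whiskerRight_coassoc (X Y : C) [ComonObj X] :
    Δ ▷ Y ≫ (Δ ▷ X) ▷ Y ≫ (α_ (X ⊗ X) X Y).hom ≫ (α_ X X (X ⊗ Y)).hom =
      Δ ▷ Y ≫ (α_ X X Y).hom ≫ X ◁ (Δ ▷ Y) ≫ X ◁ (α_ X X Y).hom := by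
  rw [← comp_whiskerRight_assoc, comul_assoc_flip, comp_whiskerRight_assoc,
    comp_whiskerRight_assoc, pentagon_inv_hom_hom_hom_hom, associator_naturality_middle_assoc]

lemma ComonObj.comul_whiskerRight_counit (X Y : C) [ComonObj X] :
    Δ ▷ Y ≫ (α_ X X Y).hom ≫ X ◁ ε ▷ Y ≫ X ◁ (λ_ Y).hom = 𝟙 (X ⊗ Y) := by
  rw [← associator_naturality_middle_assoc, ← comp_whiskerRight_assoc, comul_counit]
  monoidal

lemma MonObj.whiskerRight_mul_assoc {X : C} [MonObj X] (f g : X ⟶ X) :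
    (f ▷ X) ▷ X ≫ (X ◁ g) ▷ X ≫ μ ▷ X ≫ μ = (α_ X X X).hom ≫ X ◁ (g ▷ X ≫ μ) ≫ f ▷ X ≫ μ := by
  rw [MonObj.mul_assoc, associator_naturality_middle_assoc, associator_naturality_left_assoc,
    ← whisker_exchange_assoc, ← whisker_exchange_assoc, whiskerLeft_comp_assoc]

def IsRightLinear {X : C} [MonObj X] (g : X ⊗ X ⟶ X ⊗ X) : Prop :=
  g ▷ X ≫ (α_ X X X).hom ≫ X ◁ μ = (α_ X X X).hom ≫ X ◁ μ ≫ g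

def IsLeftColinear {X : C} [ComonObj X] (g : X ⊗ X ⟶ X ⊗ X) : Prop :=
  g ≫ Δ ▷ X ≫ (α_ X X X).hom = Δ ▷ X ≫ (α_ X X X).hom ≫ X ◁ g

lemma IsRightLinear.inv {X : C} [MonObj X] {g : X ⊗ X ⟶ X ⊗ X} [IsIso g]
    (hg : IsRightLinear g) : IsRightLinear (inv g) := by
  simp [IsRightLinear, ← cancel_epi (g ▷ X), reassoc_of% hg]

lemma IsLeftColinear.inv {X : C} [ComonObj X] {g : X ⊗ X ⟶ X ⊗ X} [IsIso g]
    (hg : IsLeftColinear g) : IsLeftColinear (inv g) := by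
  rw [IsLeftColinear, ← cancel_epi g, IsIso.hom_inv_id_assoc, reassoc_of% hg,
    ← whiskerLeft_comp, IsIso.hom_inv_id, whiskerLeft_id, Category.comp_id]

variable {X : C} [MonObj X] [ComonObj X]

def shearBy (T : X ⟶ X) : X ⊗ X ⟶ X ⊗ X := Δ ▷ X ≫ (α_ X X X).hom ≫ X ◁ (T ▷ X ≫ μ)

def shearSymbol (g : X ⊗ X ⟶ X ⊗ X) : X ⟶ X := (ρ_ X).inv ≫ X ◁ η ≫ g ≫ ε ▷ X ≫ (λ_ X).hom

lemma shearBy_id : shearBy (𝟙 X) = shear X := by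
  simp [shearBy, shear]

lemma shearBy_counit_unit : shearBy (ε ≫ η : X ⟶ X) = 𝟙 (X ⊗ X) := by
  simp only [shearBy, comp_whiskerRight, Category.assoc, one_mul, whiskerLeft_comp,
    comul_whiskerRight_counit]

lemma shearBy_convMul (T T' : X ⟶ X) :
    shearBy (Δ ≫ T ▷ X ≫ X ◁ T' ≫ μ) = shearBy T' ≫ shearBy T := by
  simp only [shearBy, Category.assoc]
  rw [whisker_exchange_assoc (f := Δ), ← associator_naturality_left_assoc,
    associator_naturality_right_assoc, reassoc_of% comul_whiskerRight_coassoc]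
  simp only [comp_whiskerRight, Category.assoc, ← whiskerLeft_comp, whiskerRight_mul_assoc]

lemma isRightLinear_shearBy (T : X ⟶ X) : IsRightLinear (shearBy T) := by
  have h := whiskerRight_mul_assoc T (𝟙 X)
  simp only [id_whiskerRight, whiskerLeft_id, Category.id_comp] at h
  simp only [IsRightLinear, shearBy, comp_whiskerRight, Category.assoc,
    associator_naturality_middle_assoc]
  rw [whisker_exchange_assoc (g := μ), associator_naturality_right_assoc,
    ← associator_naturality_left_assoc, ← pentagon_assoc]
  simp only [← whiskerLeft_comp, Category.assoc, h]

lemma isLeftColinear_shearBy (T : X ⟶ X) : IsLeftColinear (shearBy T) := by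
  simp only [IsLeftColinear, shearBy, Category.assoc]
  rw [whisker_exchange_assoc (f := Δ), ← associator_naturality_left_assoc,
    associator_naturality_right, reassoc_of% comul_whiskerRight_coassoc]
  simp only [← whiskerLeft_comp]

lemma shearSymbol_shearBy (T : X ⟶ X) : shearSymbol (shearBy T) = T := by
  simp only [shearSymbol, shearBy, Category.assoc]
  rw [whisker_exchange_assoc (g := T ▷ X ≫ μ), leftUnitor_naturality,
    ← associator_naturality_left_assoc, ← comp_whiskerRight_assoc, counit_comul]
  have : (λ_ X).inv ▷ X ≫ (α_ (𝟙_ C) X X).hom ≫ (λ_ (X ⊗ X)).hom = 𝟙 _ := by monoidal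
  rw [reassoc_of% this, whisker_exchange_assoc, ← rightUnitor_inv_naturality_assoc, mul_one]
  simp

lemma shearBy_shearSymbol {g : X ⊗ X ⟶ X ⊗ X} (hl : IsRightLinear g) (hc : IsLeftColinear g) :
    shearBy (shearSymbol g) = g := by
  have hcounit : (ε ▷ X) ▷ X ≫ (λ_ X).hom ▷ X ≫ μ =
      (α_ X X X).hom ≫ X ◁ μ ≫ ε ▷ X ≫ (λ_ X).hom := by
    rw [whisker_exchange_assoc, leftUnitor_naturality, ← associator_naturality_left_assoc]
    simp
  have hunit : (ρ_ X).inv ▷ X ≫ (X ◁ η) ▷ X ≫ (α_ X X X).hom ≫ X ◁ μ = 𝟙 (X ⊗ X) := by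
    rw [associator_naturality_middle_assoc, ← whiskerLeft_comp, one_mul]
    monoidal
  have hlin : shearSymbol g ▷ X ≫ μ = g ≫ ε ▷ X ≫ (λ_ X).hom := by
    simp only [shearSymbol, comp_whiskerRight, Category.assoc]
    rw [hcounit, reassoc_of% hl, reassoc_of% hunit]
  have hcolin : Δ ▷ X ≫ (α_ X X X).hom ≫ X ◁ (g ≫ ε ▷ X ≫ (λ_ X).hom) = g := by
    rw [whiskerLeft_comp, whiskerLeft_comp, ← reassoc_of% hc, comul_whiskerRight_counit,
      Category.comp_id]
  rw [shearBy, hlin, hcolin]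

lemma shearBy_injective : Function.Injective (shearBy (X := X)) :=
  Function.LeftInverse.injective shearSymbol_shearBy

lemma shear_comp_shearBy (S : X ⟶ X) : shear X ≫ shearBy S = shearBy (Δ ≫ S ▷ X ≫ μ) := by
  simpa [shearBy_id] using (shearBy_convMul S (𝟙 X)).symm

lemma shearBy_comp_shear (S : X ⟶ X) : shearBy S ≫ shear X = shearBy (Δ ≫ X ◁ S ≫ μ) := by
  simpa [shearBy_id] using (shearBy_convMul (𝟙 X) S).symm

variable (X) in
def HasAntipode : Prop := ∃ S : X ⟶ X, Δ ≫ S ▷ X ≫ μ = ε ≫ η ∧ Δ ≫ X ◁ S ≫ μ = ε ≫ η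

theorem isIso_shear_iff_hasAntipode : IsIso (shear X) ↔ HasAntipode X := by
  simp only [HasAntipode, ← shearBy_injective.eq_iff, ← shear_comp_shearBy, ← shearBy_comp_shear,
    shearBy_counit_unit]
  refine ⟨fun _ ↦ ⟨shearSymbol (inv (shear X)), ?_⟩, fun ⟨S, hl, hr⟩ ↦ ⟨shearBy S, hl, hr⟩⟩
  obtain ⟨hl, hc⟩ : IsRightLinear (shear X) ∧ IsLeftColinear (shear X) :=
    shearBy_id (X := X) ▸ ⟨isRightLinear_shearBy _, isLeftColinear_shearBy _⟩
  simp [shearBy_shearSymbol hl.inv hc.inv]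

instance mopComonObj (X : C) [ComonObj X] : ComonObj (mop X) where
  counit := ε[X].mop
  comul := Δ[X].mop
  counit_comul := Quiver.Hom.unmop_inj (by simp)
  comul_counit := Quiver.Hom.unmop_inj (by simp)
  comul_assoc := Quiver.Hom.unmop_inj (by simp)

lemma hasAntipode_mop_iff : HasAntipode (mop X) ↔ HasAntipode X :=
  ⟨fun ⟨S, hl, hr⟩ ↦ ⟨S.unmop, congrArg Quiver.Hom.unmop hr, congrArg Quiver.Hom.unmop hl⟩,
    fun ⟨S, hl, hr⟩ ↦ ⟨S.mop, congrArg Quiver.Hom.mop hr, congrArg Quiver.Hom.mop hl⟩⟩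

lemma unmop_shear_mop : (shear (mop X)).unmop = shear' X := rfl

theorem isIso_shear'_iff_hasAntipode : IsIso (shear' X) ↔ HasAntipode X := by
  rw [← hasAntipode_mop_iff, ← isIso_shear_iff_hasAntipode, ← unmop_shear_mop]
  exact isIso_iff_of_reflects_iso _ (unmopEquiv C).functor

theorem isIso_shear_iff_isIso_shear' : IsIso (shear X) ↔ IsIso (shear' X) :=
  isIso_shear_iff_hasAntipode.trans isIso_shear'_iff_hasAntipode.symm

section Braided

variable [BraidedCategory C]

abbrev ComonObj.coop (X : C) [ComonObj X] : ComonObj X where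
  counit := ε
  comul := Δ ≫ (β_ X X).inv
  counit_comul := by
    rw [Category.assoc, ← braiding_inv_naturality_right, comul_counit_assoc,
      braiding_inv_tensorUnit_left, Iso.inv_hom_id_assoc]
  comul_counit := by
    rw [Category.assoc, ← braiding_inv_naturality_left, counit_comul_assoc,
      braiding_inv_tensorUnit_right, Iso.inv_hom_id_assoc]
  comul_assoc := by
    simp only [Category.assoc, ← braiding_inv_naturality_left_assoc,
      ← braiding_inv_naturality_right_assoc, comp_whiskerRight, whiskerLeft_comp,
      comul_assoc_flip_assoc]
    simp

lemma coshear_eq : coshear X = @shear C _ _ X _ (.coop X) ≫ (β_ X X).hom := by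
  change _ = ((Δ ≫ (β_ X X).inv) ▷ X ≫ (α_ X X X).hom ≫ X ◁ μ) ≫ (β_ X X).hom
  rw [Category.assoc, Category.assoc, braiding_naturality_right, braiding_tensor_right_hom]
  simp [coshear]

lemma coshear'_eq : coshear' X = @shear' C _ _ X _ (.coop X) ≫ (β_ X X).hom := by
  change _ = (X ◁ (Δ ≫ (β_ X X).inv) ≫ (α_ X X X).inv ≫ μ ▷ X) ≫ (β_ X X).hom
  rw [Category.assoc, Category.assoc, braiding_naturality_left, braiding_tensor_left_hom]
  simp [coshear']

theorem isIso_coshear_iff_isIso_coshear' : IsIso (coshear X) ↔ IsIso (coshear' X) := by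
  rw [coshear_eq, coshear'_eq, isIso_comp_right_iff, isIso_comp_right_iff]
  exact @isIso_shear_iff_isIso_shear' C _ _ X _ (.coop X)

end Braided

end CategoryTheory

-- `B.shear` etc. are, by definition, `shear B.X.X` etc. for Mathlib's instance `BimonObj B.X.X`.
/-- For a bimonoid `B` in a braided monoidal category:
(i) the shear morphism is an isomorphism iff the reversed shear morphism is; and
(ii) the coshear morphism is an isomorphism iff the reversed coshear morphism is. -/
theorem Bimon_.isIso_shear_iff_and_isIso_coshear_iff (B : Bimon_ C) :
    (IsIso B.shear ↔ IsIso B.shear') ∧ (IsIso B.coshear ↔ IsIso B.coshear') :=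
  ⟨isIso_shear_iff_isIso_shear' (X := B.X.X), isIso_coshear_iff_isIso_coshear' (X := B.X.X)⟩
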